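/- For positive integers m, n, real k_f, and τ = u+iv ∈ ℍ with q = e^{2πiτ}: applying the operator h ↦ i v^{κ} · conjugate((∂/∂u + i ∂/∂v) h) to h(τ) = Γ(1-k_f, 4πmv) q^{n-m} yields -v^{k_g} (4πm)^{1-k_f} e^{2πim τ} e^{-2πin \bar{τ}}, where κ = k_f + k_g. -/

import Mathlib

/-!
The factor `q^{n-m}` is holomorphic in `τ`, so by the Cauchy–Riemann equations the operator
`∂/∂u + i ∂/∂v` annihilates it and only the `v`-derivative of `Γ(1-k_f, 4πmv)` survives, namely
`-(4πm)^{1-k_f} v^{-k_f} e^{-4πmv}`. After conjugating and multiplying by `i v^κ`, the power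
`v^{-k_f}` cancels against `v^κ`, and `e^{-4πmv} · conj(q^{n-m}) = e^{2πimτ} e^{-2πinτ̄}`.
-/

open Real

/-- The upper incomplete Gamma function `Γ(s,x) = ∫_x^∞ t^{s-1} e^{-t} dt`. -/
noncomputable def uGamma (s x : ℝ) : ℝ := ∫ t in Set.Ioi x, t ^ (s - 1) * Real.exp (-t)

open MeasureTheory Set Complex

theorem hasDerivAt_integral_Ioi {E : Type*} [NormedAddCommGroup E] [NormedSpace ℝ E]
    [CompleteSpace E] {f : ℝ → E} {a x : ℝ} (hf : IntegrableOn f (Ioi a)) (hax : a < x)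
    (hfx : ContinuousAt f x) : HasDerivAt (fun y => ∫ t in Ioi y, f t) (-f x) x := by
  have hint : IntervalIntegrable f volume a x :=
    (intervalIntegrable_iff_integrableOn_Ioc_of_le hax.le).2 (hf.mono_set Ioc_subset_Ioi_self)
  have hD := (intervalIntegral.integral_hasDerivAt_right hint
    ⟨Ioi a, Ioi_mem_nhds hax, hf.aestronglyMeasurable⟩ hfx).const_sub (∫ t in Ioi a, f t)
  refine hD.congr_of_eventuallyEq ?_
  filter_upwards [Ioi_mem_nhds hax] with y hy
  rw [← intervalIntegral.integral_Ioi_sub_Ioi hf hy.le, sub_sub_cancel]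

theorem integrableOn_rpow_mul_exp_neg_Ioi (s : ℝ) {a : ℝ} (ha : 0 < a) :
    IntegrableOn (fun t : ℝ => t ^ s * rexp (-t)) (Ioi a) := by
  refine integrable_of_isBigO_exp_neg one_half_pos ?_ ?_
  · exact (continuousOn_id.rpow_const fun x hx => Or.inl (ha.trans_le hx).ne').mul
      (Real.continuous_exp.comp continuous_neg).continuousOn
  · simpa [mul_comm] using (Real.Gamma_integrand_isLittleO s).isBigO

theorem hasDerivAt_uGamma (s : ℝ) {x : ℝ} (hx : 0 < x) :
    HasDerivAt (uGamma s) (-(x ^ (s - 1) * rexp (-x))) x :=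
  hasDerivAt_integral_Ioi (integrableOn_rpow_mul_exp_neg_Ioi (s - 1) (half_pos hx))
    (half_lt_self hx)
    ((continuousAt_rpow_const x _ (Or.inl hx.ne')).mul
      (Real.continuous_exp.comp continuous_neg).continuousAt)

theorem hasDerivAt_uGamma_mul (s : ℝ) {a v : ℝ} (ha : 0 < a) (hv : 0 < v) :
    HasDerivAt (fun v => uGamma s (a * v)) (-(a ^ s * v ^ (s - 1) * rexp (-(a * v)))) v := by
  have h := (hasDerivAt_uGamma s (mul_pos ha hv)).comp v ((hasDerivAt_id v).const_mul a)
  refine h.congr_deriv ?_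
  rw [mul_rpow ha.le hv.le, rpow_sub_one ha.ne']
  field_simp

theorem deriv_add_I_mul_deriv_mul_holomorphic {F : ℂ → ℂ} {F' : ℂ} {g : ℝ → ℂ} {g' : ℂ}
    {u v : ℝ} (hF : HasDerivAt F F' (u + I * v)) (hg : HasDerivAt g g' v) :
    deriv (fun u' : ℝ => g v * F (u' + I * v)) u
        + I * deriv (fun v' : ℝ => g v' * F (u + I * v')) v = I * g' * F (u + I * v) := by
  have hu : HasDerivAt (fun u' : ℝ => (u' : ℂ) + I * v) 1 u :=
    (hasDerivAt_id u).ofReal_comp.add_const _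
  have hv : HasDerivAt (fun v' : ℝ => (u : ℂ) + I * v') I v := by
    simpa using ((hasDerivAt_id v).ofReal_comp.const_mul I).const_add (u : ℂ)
  have hdu : HasDerivAt (fun u' : ℝ => g v * F (u' + I * v)) (g v * (F' * 1)) u :=
    (hF.comp u hu).const_mul (g v)
  have hdv : HasDerivAt (fun v' : ℝ => g v' * F (u + I * v'))
      (g' * F (u + I * v) + g v * (F' * I)) v :=
    hg.mul (hF.comp v hv)
  rw [hdu.deriv, hdv.deriv]
  linear_combination g v * F' * I_sq

theorem xi_of_incomplete_gamma_term_general (m n : ℕ) (hm : 0 < m)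
    (kf kg : ℝ) (u v : ℝ) (hv : 0 < v) :
    Complex.I * ((v ^ (kf + kg) : ℝ) : ℂ) * (starRingEnd ℂ)
        (deriv (fun u' : ℝ => ((uGamma (1 - kf) (4 * π * m * v) : ℝ) : ℂ) *
            Complex.exp (2 * (π : ℂ) * Complex.I * ((n : ℂ) - m) * ((u' : ℂ) + Complex.I * v))) u
          + Complex.I * deriv (fun v' : ℝ => ((uGamma (1 - kf) (4 * π * m * v') : ℝ) : ℂ) *
            Complex.exp (2 * (π : ℂ) * Complex.I * ((n : ℂ) - m) * ((u : ℂ) + Complex.I * v'))) v)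
      = -((v ^ kg : ℝ) : ℂ) * (((4 * π * m) ^ (1 - kf) : ℝ) : ℂ) *
          Complex.exp (2 * (π : ℂ) * Complex.I * (m : ℂ) * ((u : ℂ) + Complex.I * v)) *
          Complex.exp (-(2 * (π : ℂ) * Complex.I * (n : ℂ) * ((u : ℂ) - Complex.I * v))) := by
  set a : ℝ := 4 * π * m
  set c : ℂ := 2 * π * I * (n - m)
  have hq : HasDerivAt (fun z => cexp (c * z)) (c * cexp (c * (u + I * v))) (u + I * v) := by
    simpa [mul_comm] using ((hasDerivAt_id _).const_mul c).cexp
  have hΓ := (hasDerivAt_uGamma_mul (1 - kf) (by positivity : 0 < a) hv).ofReal_comp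
  rw [deriv_add_I_mul_deriv_mul_holomorphic hq hΓ]
  have hpow : v ^ (kf + kg) * v ^ (1 - kf - 1) = v ^ kg := by
    rw [← rpow_add hv]; ring_nf
  have hconj : (starRingEnd ℂ) (c * (u + I * v)) - a * v
      = 2 * π * I * m * (u + I * v) + -(2 * π * I * n * (u - I * v)) := by
    simp only [c, a, map_mul, map_sub, map_add, conj_I, conj_ofReal, conj_natCast, map_ofNat]
    push_cast
    linear_combination (-(4 * (π : ℂ) * (m : ℂ) * (v : ℂ))) * I_sq
  rw [mul_assoc _ (cexp _), ← Complex.exp_add, ← hconj, Complex.exp_sub, map_mul, map_mul,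
    conj_I, conj_ofReal, ← exp_conj, ← hpow]
  push_cast
  rw [Complex.exp_neg]
  field_simp
  linear_combination
    ((v ^ (kf + kg) : ℝ) * (a ^ (1 - kf) : ℝ) * (v ^ (1 - kf - 1) : ℝ) : ℂ) * I_sq

/-- For positive integers `m, n`, reals `k_f, k_g` with `κ = k_f + k_g`, and `τ = u + iv ∈ ℍ`:
applying `h ↦ i v^κ conj((∂/∂u + i ∂/∂v) h)` to `h = Γ(1-k_f, 4πmv) q^{n-m}` yields
`-v^{k_g} (4πm)^{1-k_f} e^{2πimτ} e^{-2πinτ̄}`. -/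
theorem xi_of_incomplete_gamma_term (m n : ℕ) (hm : 0 < m) (hn : 0 < n)
    (kf kg : ℝ) (u v : ℝ) (hv : 0 < v) :
    Complex.I * ((v ^ (kf + kg) : ℝ) : ℂ) * (starRingEnd ℂ)
        (deriv (fun u' : ℝ => ((uGamma (1 - kf) (4 * π * m * v) : ℝ) : ℂ) *
            Complex.exp (2 * (π : ℂ) * Complex.I * ((n : ℂ) - m) * ((u' : ℂ) + Complex.I * v))) u
          + Complex.I * deriv (fun v' : ℝ => ((uGamma (1 - kf) (4 * π * m * v') : ℝ) : ℂ) *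
            Complex.exp (2 * (π : ℂ) * Complex.I * ((n : ℂ) - m) * ((u : ℂ) + Complex.I * v'))) v)
      = -((v ^ kg : ℝ) : ℂ) * (((4 * π * m) ^ (1 - kf) : ℝ) : ℂ) *
          Complex.exp (2 * (π : ℂ) * Complex.I * (m : ℂ) * ((u : ℂ) + Complex.I * v)) *
          Complex.exp (-(2 * (π : ℂ) * Complex.I * (n : ℂ) * ((u : ℂ) - Complex.I * v))) :=
  xi_of_incomplete_gamma_term_general m n hm kf kg u v hv
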